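/- No density matrix supported on the antisymmetric subspace of (ℂ^d)^⊗N (N ≥ 2) is separable with respect to any bipartition of the parties; in particular no such state is fully separable. -/

import Mathlib

/-!
Let `i ∈ S`, `j ∉ S` and let `t` be the transposition of the parties `i` and `j`. Antisymmetry
gives `ρ P_t = -ρ`, so `Tr(ρ P_t) = -Tr ρ = -1`. For a product `σ ⊗ τ` across `S | Sᶜ`, on the
other hand, `Tr((σ ⊗ τ) P_t) = Tr(σ_i τ_j)`, where `σ_i` and `τ_j` are the one-party marginals of
`σ` at `i` and of `τ` at `j`. This is the trace of a product of two positive semidefinite matrices,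
hence nonnegative, and by convexity so is `Tr(ρ P_t)` for every separable `ρ`.
-/

open Matrix
open scoped ComplexOrder

/-- Permutation operator `P_σ` on `(ℂ^d)^⊗N`, acting on coefficient functions by
`(P_σ v) f = v (f ∘ σ)`. -/
noncomputable def permOp (N d : ℕ) (σ : Equiv.Perm (Fin N)) :
    Matrix (Fin N → Fin d) (Fin N → Fin d) ℂ :=
  fun f g => if g = f ∘ σ then 1 else 0

/-- Antisymmetrizer: projector onto the antisymmetric subspace of `(ℂ^d)^⊗N`. -/
noncomputable def antisymProj (N d : ℕ) : Matrix (Fin N → Fin d) (Fin N → Fin d) ℂ :=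
  (1 / (Nat.factorial N) : ℂ) •
    ∑ σ : Equiv.Perm (Fin N), (((Equiv.Perm.sign σ : ℤ) : ℂ)) • permOp N d σ

open Function Finset

theorem Fintype.sum_sum_update {ι β R : Type*} [Fintype ι] [DecidableEq ι] [Fintype β]
    [AddCommMonoid R] (F : (ι → β) → R) (i : ι) :
    ∑ a : ι → β, ∑ x, F (update a i x) = Fintype.card β • ∑ u, F u := by
  have hinv : Involutive fun p : (ι → β) × β => (update p.1 i p.2, p.1 i) := by
    rintro ⟨a, x⟩
    simp
  calc ∑ a : ι → β, ∑ x, F (update a i x)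
      = ∑ p : (ι → β) × β, F (update p.1 i p.2) := (Fintype.sum_prod_type' _).symm
    _ = ∑ p : (ι → β) × β, F p.1 := Fintype.sum_equiv hinv.toPerm _ _ fun _ => rfl
    _ = Fintype.card β • ∑ u, F u := by
      rw [Fintype.sum_prod_type, sum_comm]
      simp

namespace Matrix

open scoped MatrixOrder in
theorem PosSemidef.trace_mul_nonneg {n 𝕜 : Type*} [Fintype n] [RCLike 𝕜]
    {A B : Matrix n n 𝕜} (hA : A.PosSemidef) (hB : B.PosSemidef) : 0 ≤ (A * B).trace := by
  classical
  obtain ⟨C, rfl⟩ := CStarAlgebra.nonneg_iff_eq_star_mul_self.mp hA.nonneg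
  rw [star_eq_conjTranspose, Matrix.mul_assoc, trace_mul_comm]
  exact (hB.mul_mul_conjTranspose_same C).trace_nonneg

variable {ι β 𝕜 : Type*} [Fintype ι] [DecidableEq ι] [Fintype β] [RCLike 𝕜]

/-- `card β` times the marginal of `σ` at the factor `i` of `(𝕜^β)^⊗ι`: each assignment of the
other factors occurs `card β` times among the `a : ι → β`. -/
noncomputable def scaledMarginal (σ : Matrix (ι → β) (ι → β) 𝕜) (i : ι) : Matrix β β 𝕜 :=
  ∑ a : ι → β, σ.submatrix (update a i) (update a i)

theorem PosSemidef.scaledMarginal {σ : Matrix (ι → β) (ι → β) 𝕜} (hσ : σ.PosSemidef) (i : ι) :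
    (σ.scaledMarginal i).PosSemidef :=
  posSemidef_sum _ fun _ _ => hσ.submatrix _

theorem trace_scaledMarginal_mul_scaledMarginal {κ : Type*} [Fintype κ] [DecidableEq κ]
    (σ : Matrix (ι → β) (ι → β) 𝕜) (τ : Matrix (κ → β) (κ → β) 𝕜) (i : ι) (j : κ) :
    (σ.scaledMarginal i * τ.scaledMarginal j).trace =
      (Fintype.card β : 𝕜) ^ 2 * ∑ u, ∑ v, σ u (update u i (v j)) * τ v (update v j (u i)) := by
  rw [sq, mul_assoc, mul_sum, ← nsmul_eq_mul]
  simp_rw [← nsmul_eq_mul, ← Fintype.sum_sum_update _ i, ← Fintype.sum_sum_update _ j]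
  simp only [update_self, update_idem, trace, diag_apply, mul_apply, scaledMarginal, sum_apply,
    submatrix_apply, sum_mul, mul_sum]
  exact (sum_congr rfl fun _ _ => sum_comm).trans sum_comm

theorem sum_restrict_swap_eq {S : Finset ι} {i j : ι} (hi : i ∈ S) (hj : j ∉ S)
    (σ : Matrix ({l // l ∈ S} → β) ({l // l ∈ S} → β) 𝕜)
    (τ : Matrix ({l // l ∉ S} → β) ({l // l ∉ S} → β) 𝕜) :
    ∑ f : ι → β, σ (fun l => f l) (fun l => f (Equiv.swap i j l)) *
        τ (fun l => f l) (fun l => f (Equiv.swap i j l)) =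
      ∑ u, ∑ v, σ u (update u ⟨i, hi⟩ (v ⟨j, hj⟩)) * τ v (update v ⟨j, hj⟩ (u ⟨i, hi⟩)) := by
  have hσ (f : ι → β) : (fun l : {l // l ∈ S} => f (Equiv.swap i j l)) =
      update (fun l : {l // l ∈ S} => f l) ⟨i, hi⟩ (f j) := by
    ext ⟨l, hl⟩
    rcases eq_or_ne l i with rfl | hli
    · simp
    · rw [update_of_ne (by simpa using hli),
        Equiv.swap_apply_of_ne_of_ne hli (by rintro rfl; exact hj hl)]
  have hτ (f : ι → β) : (fun l : {l // l ∉ S} => f (Equiv.swap i j l)) =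
      update (fun l : {l // l ∉ S} => f l) ⟨j, hj⟩ (f i) := by
    ext ⟨l, hl⟩
    rcases eq_or_ne l j with rfl | hlj
    · simp
    · rw [update_of_ne (by simpa using hlj),
        Equiv.swap_apply_of_ne_of_ne (by rintro rfl; exact hl hi) hlj]
  simp only [hσ, hτ]
  rw [← Fintype.sum_prod_type']
  exact Fintype.sum_equiv (Equiv.piEquivPiSubtypeProd (· ∈ S) fun _ => β) _ _ fun _ => rfl

theorem PosSemidef.sum_restrict_swap_nonneg {S : Finset ι} {i j : ι} (hi : i ∈ S) (hj : j ∉ S)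
    {σ : Matrix ({l // l ∈ S} → β) ({l // l ∈ S} → β) 𝕜}
    {τ : Matrix ({l // l ∉ S} → β) ({l // l ∉ S} → β) 𝕜}
    (hσ : σ.PosSemidef) (hτ : τ.PosSemidef) :
    0 ≤ ∑ f : ι → β, σ (fun l => f l) (fun l => f (Equiv.swap i j l)) *
        τ (fun l => f l) (fun l => f (Equiv.swap i j l)) := by
  rcases isEmpty_or_nonempty β with hβ | _
  · have : IsEmpty (ι → β) := ⟨fun f => hβ.false (f i)⟩
    simp
  have key := (hσ.scaledMarginal ⟨i, hi⟩).trace_mul_nonneg (hτ.scaledMarginal ⟨j, hj⟩)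
  rw [trace_scaledMarginal_mul_scaledMarginal, ← sum_restrict_swap_eq hi hj] at key
  have hcard : (0 : 𝕜) < (Fintype.card β : 𝕜) ^ 2 := by positivity
  exact le_of_mul_le_mul_left (by rwa [mul_zero]) hcard

theorem sum_apply_comp_swap_nonneg_of_separable {κ : Type*} [Fintype κ] {S : Finset ι}
    {i j : ι} (hi : i ∈ S) (hj : j ∉ S) {ρ : Matrix (ι → β) (ι → β) 𝕜} {w : κ → ℝ}
    {σs : κ → Matrix ({l // l ∈ S} → β) ({l // l ∈ S} → β) 𝕜}
    {τs : κ → Matrix ({l // l ∉ S} → β) ({l // l ∉ S} → β) 𝕜}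
    (hw : ∀ k, 0 ≤ w k) (hσ : ∀ k, (σs k).PosSemidef) (hτ : ∀ k, (τs k).PosSemidef)
    (hρ : ∀ f g, ρ f g = ∑ k, (w k : 𝕜) * σs k (fun l => f l) (fun l => g l) *
      τs k (fun l => f l) (fun l => g l)) :
    0 ≤ ∑ f, ρ f (f ∘ Equiv.swap i j) := by
  simp only [hρ, mul_assoc]
  rw [sum_comm]
  refine sum_nonneg fun k _ => ?_
  rw [← mul_sum]
  exact mul_nonneg (by exact_mod_cast hw k) ((hσ k).sum_restrict_swap_nonneg hi hj (hτ k))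

end Matrix

theorem mul_permOp_apply {N d : ℕ} (M : Matrix (Fin N → Fin d) (Fin N → Fin d) ℂ)
    (σ : Equiv.Perm (Fin N)) (f g : Fin N → Fin d) :
    (M * permOp N d σ) f g = M f (g ∘ σ.symm) := by
  simp only [permOp, mul_apply, mul_ite, mul_one, mul_zero, eq_comm (a := g),
    ← Equiv.eq_comp_symm, sum_ite_eq', mem_univ, if_true]

theorem permOp_mul (N d : ℕ) (σ τ : Equiv.Perm (Fin N)) :
    permOp N d σ * permOp N d τ = permOp N d (σ * τ) := by
  ext f g
  simp only [mul_permOp_apply, permOp, Equiv.comp_symm_eq, Equiv.Perm.coe_mul, comp_assoc]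
  congr

theorem antisymProj_mul_permOp_swap (N d : ℕ) {i j : Fin N} (hij : i ≠ j) :
    antisymProj N d * permOp N d (Equiv.swap i j) = -antisymProj N d := by
  unfold antisymProj
  rw [smul_mul, sum_mul]
  simp_rw [smul_mul, permOp_mul]
  rw [← smul_neg, ← sum_neg_distrib]
  congr 1
  refine Fintype.sum_equiv (Equiv.mulRight (Equiv.swap i j)) _ _ fun σ => ?_
  rw [Equiv.coe_mulRight, Equiv.Perm.sign_mul, Equiv.Perm.sign_swap hij, ← neg_smul]
  push_cast
  ring_nf

theorem sum_apply_comp_swap_of_antisymm {N d : ℕ} {ρ : Matrix (Fin N → Fin d) (Fin N → Fin d) ℂ}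
    (hρ : antisymProj N d * ρ * antisymProj N d = ρ) {i j : Fin N} (hij : i ≠ j) :
    ∑ f, ρ f (f ∘ Equiv.swap i j) = -ρ.trace := by
  have hswap : ρ * permOp N d (Equiv.swap i j) = -ρ := by
    rw [← hρ, Matrix.mul_assoc, antisymProj_mul_permOp_swap N d hij, Matrix.mul_neg]
  calc ∑ f, ρ f (f ∘ Equiv.swap i j) = (ρ * permOp N d (Equiv.swap i j)).trace := by
        simp [trace, mul_permOp_apply]
    _ = -ρ.trace := by rw [hswap, trace_neg]

theorem antisymmetric_state_not_separable_general (N d : ℕ)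
    (ρ : Matrix (Fin N → Fin d) (Fin N → Fin d) ℂ)
    (htr : ρ.trace = 1)
    (hsupp : antisymProj N d * ρ * antisymProj N d = ρ) :
    ∀ S : Finset (Fin N), S.Nonempty → Sᶜ.Nonempty →
      ¬ ∃ (K : ℕ) (w : Fin K → ℝ)
          (σs : Fin K → Matrix ({i // i ∈ S} → Fin d) ({i // i ∈ S} → Fin d) ℂ)
          (τs : Fin K → Matrix ({i // i ∉ S} → Fin d) ({i // i ∉ S} → Fin d) ℂ),
          (∀ k, 0 ≤ w k) ∧ ∑ k, w k = 1 ∧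
          (∀ k, (σs k).PosSemidef ∧ (σs k).trace = 1) ∧
          (∀ k, (τs k).PosSemidef ∧ (τs k).trace = 1) ∧
          ∀ f g, ρ f g = ∑ k, (w k : ℂ) *
            σs k (fun i => f i.1) (fun i => g i.1) *
            τs k (fun i => f i.1) (fun i => g i.1) := by
  rintro S ⟨i, hi⟩ ⟨j, hj⟩ ⟨K, w, σs, τs, hw, -, hσ, hτ, hsep⟩
  rw [mem_compl] at hj
  have hnonneg := sum_apply_comp_swap_nonneg_of_separable hi hj hw
    (fun k => (hσ k).1) (fun k => (hτ k).1) hsep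
  rw [sum_apply_comp_swap_of_antisymm hsupp (ne_of_mem_of_not_mem hi hj), htr] at hnonneg
  exact absurd hnonneg (by norm_num)

/-- No density matrix supported on the antisymmetric subspace of `(ℂ^d)^⊗N` (`N ≥ 2`)
is separable with respect to any nontrivial bipartition `S | Sᶜ` of the parties. -/
theorem antisymmetric_state_not_separable (N d : ℕ) (hN : 2 ≤ N)
    (ρ : Matrix (Fin N → Fin d) (Fin N → Fin d) ℂ)
    (hρ : ρ.PosSemidef) (htr : ρ.trace = 1)
    (hsupp : antisymProj N d * ρ * antisymProj N d = ρ) :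
    ∀ S : Finset (Fin N), S.Nonempty → Sᶜ.Nonempty →
      ¬ ∃ (K : ℕ) (w : Fin K → ℝ)
          (σs : Fin K → Matrix ({i // i ∈ S} → Fin d) ({i // i ∈ S} → Fin d) ℂ)
          (τs : Fin K → Matrix ({i // i ∉ S} → Fin d) ({i // i ∉ S} → Fin d) ℂ),
          (∀ k, 0 ≤ w k) ∧ ∑ k, w k = 1 ∧
          (∀ k, (σs k).PosSemidef ∧ (σs k).trace = 1) ∧
          (∀ k, (τs k).PosSemidef ∧ (τs k).trace = 1) ∧
          ∀ f g, ρ f g = ∑ k, (w k : ℂ) *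
            σs k (fun i => f i.1) (fun i => g i.1) *
            τs k (fun i => f i.1) (fun i => g i.1) :=
  antisymmetric_state_not_separable_general N d ρ htr hsupp
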